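/- Fix n ≥ 1, a point x⁰ ∈ ℝⁿ, and a positive real Δ₁ = Δ₂ = ⋯ = Δ_n =: h (so the sample region is a hypercube of side h), with Δ = hⁿ and Δ_S = h√n. Let f : ℝⁿ → ℝ be twice continuously differentiable on an open set containing the hypercube R(x⁰;d) = {x⁰ + x : 0 ≤ x_i ≤ h}, with ∇f Lipschitz continuous with constant L_{∇f} on R(x⁰;d). Define w ∈ ℝⁿ by w_i = ∫_{R(0;d)} x_i · (f(x⁰+x) − f(x⁰) − ∇f(x⁰)ᵀx) dx over the box ∏_{i=1}^n [0, h], and let D = h·Id_n. Then ‖D⁻¹ w‖ ≤ (√n / 24) · ((2n+1)/n) · L_{∇f} · Δ · Δ_S². -/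

import Mathlib

/-!
The first-order Taylor remainder `R x = f (x0 + x) - f x0 - ⟪∇f x0, x⟫` satisfies
`|R x| ≤ L/2 ‖x‖²` because `∇f` is `L`-Lipschitz along the segment from `x0` to `x0 + x`.
As `x i ≥ 0` on the cube, `|w i| ≤ L/2 ∫ x i ‖x‖²`, and by Fubini this moment is
`(2n+1) h^(n+3) / 12`: the term `x i ^ 3` contributes `h^(n+3)/4` and each of the other
`n - 1` terms `x i * x j ^ 2` contributes `h^(n+3)/6`. So every coordinate of `D⁻¹ w` is at most
`L (2n+1) h^(n+2) / 24`, and the Euclidean norm costs a factor `√n`.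
-/

open scoped BigOperators

noncomputable section

/-- Interpret a plain vector in `Fin n → ℝ` as an element of Euclidean space,
so that `‖·‖` is the Euclidean norm. -/
def vecE {n : ℕ} (v : Fin n → ℝ) : EuclideanSpace ℝ (Fin n) :=
  (EuclideanSpace.equiv (Fin n) ℝ).symm v

/-- The cube `[0,h]ⁿ` in Euclidean space. -/
def cube (n : ℕ) (h : ℝ) : Set (EuclideanSpace ℝ (Fin n)) :=
  {x | ∀ l, x l ∈ Set.Icc (0 : ℝ) h}

open MeasureTheory Set
open scoped NNReal RealInnerProductSpace

theorem abs_sub_sub_inner_gradient_le {E : Type*} [NormedAddCommGroup E] [InnerProductSpace ℝ E]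
    [CompleteSpace E] {f : E → ℝ} {s : Set E} {L : ℝ≥0} (hs : Convex ℝ s)
    (hf : ∀ y ∈ s, DifferentiableAt ℝ f y) (hlip : LipschitzOnWith L (gradient f) s)
    {a b : E} (ha : a ∈ s) (hb : b ∈ s) :
    |f b - f a - ⟪gradient f a, b - a⟫| ≤ L / 2 * ‖b - a‖ ^ 2 := by
  set c : ℝ → E := fun t => AffineMap.lineMap a b t
  have hc : ∀ t ∈ Icc (0 : ℝ) 1, c t ∈ s := fun t ht => hs.lineMap_mem ha hb ht
  have hderiv : ∀ t ∈ Icc (0 : ℝ) 1, HasDerivAt (fun t => f (c t) - t * ⟪gradient f a, b - a⟫)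
      (⟪gradient f (c t) - gradient f a, b - a⟫) t := by
    intro t ht
    rw [inner_sub_left]
    refine HasDerivAt.sub ?_ ?_
    · exact (hf _ (hc t ht)).hasGradientAt.hasFDerivAt.comp_hasDerivAt t
        (AffineMap.hasDerivAt_lineMap)
    · simpa using (hasDerivAt_id t).mul_const (⟪gradient f a, b - a⟫)
  have hB (t : ℝ) : HasDerivAt (fun t => L / 2 * ‖b - a‖ ^ 2 * t ^ 2) (L * ‖b - a‖ ^ 2 * t) t :=
    ((hasDerivAt_pow 2 t).const_mul _).congr_deriv (by norm_num; ring)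
  have hbound : ∀ t ∈ Ico (0 : ℝ) 1,
      ‖⟪gradient f (c t) - gradient f a, b - a⟫‖ ≤ L * ‖b - a‖ ^ 2 * t := fun t ht =>
    calc ‖⟪gradient f (c t) - gradient f a, b - a⟫‖
        ≤ ‖gradient f (c t) - gradient f a‖ * ‖b - a‖ := norm_inner_le_norm _ _
      _ ≤ L * ‖c t - a‖ * ‖b - a‖ := by
        gcongr; exact hlip.norm_sub_le (hc t (Ico_subset_Icc_self ht)) ha
      _ = L * ‖b - a‖ ^ 2 * t := by
        rw [← vsub_eq_sub, AffineMap.lineMap_vsub_left, norm_smul, Real.norm_of_nonneg ht.1,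
          vsub_eq_sub]
        ring
  -- The remainder along the segment is fenced by the parabola `L/2 ‖b - a‖² t²`.
  have hfence := image_norm_le_of_norm_deriv_right_le_deriv_boundary
    (f := fun t => f (c t) - t * ⟪gradient f a, b - a⟫ - f a)
    (fun t ht => ((hderiv t ht).sub_const _).continuousAt.continuousWithinAt)
    (fun t ht => ((hderiv t (Ico_subset_Icc_self ht)).sub_const _).hasDerivWithinAt)
    (by simp [c]) hB hbound (right_mem_Icc.2 zero_le_one)
  simpa [c, Real.norm_eq_abs, sub_right_comm _ _ (f a)] using hfence

theorem cube_eq_preimage_ofLp (n : ℕ) (h : ℝ) :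
    cube n h = WithLp.ofLp ⁻¹' Set.univ.pi fun _ => Icc 0 h := by
  ext x; simp only [cube, mem_ofPred_eq, mem_preimage, mem_univ_pi]

theorem isCompact_cube (n : ℕ) (h : ℝ) : IsCompact (cube n h) := by
  rw [cube_eq_preimage_ofLp]
  exact (PiLp.homeomorph 2 _).isCompact_preimage.2 (isCompact_univ_pi fun _ => isCompact_Icc)

theorem convex_cube (n : ℕ) (h : ℝ) : Convex ℝ (cube n h) := by
  rw [cube_eq_preimage_ofLp]
  exact (convex_pi fun _ _ => convex_Icc 0 h).linear_preimage (WithLp.linearEquiv 2 ℝ _).toLinearMap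

theorem setIntegral_cube_prod_pow (n : ℕ) {h : ℝ} (hh : 0 ≤ h) (k : Fin n → ℕ) :
    ∫ x in cube n h, ∏ l, x l ^ k l = ∏ l, h ^ (k l + 1) / (k l + 1) := by
  rw [cube_eq_preimage_ofLp, (PiLp.volume_preserving_ofLp (Fin n)).setIntegral_preimage_emb
    (MeasurableEquiv.toLp 2 (Fin n → ℝ)).symm.measurableEmbedding (fun y => ∏ l, y l ^ k l),
    volume_pi, Measure.restrict_pi_pi,
    integral_fintype_prod_eq_prod (fun l t => t ^ k l)]
  refine Finset.prod_congr rfl fun l _ => ?_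
  rw [integral_Icc_eq_integral_Ioc, ← intervalIntegral.integral_of_le hh, integral_pow]
  simp

theorem setIntegral_cube_mul_sq (n : ℕ) {h : ℝ} (hh : 0 ≤ h) (i j : Fin n) :
    ∫ x in cube n h, x i * x j ^ 2 = h ^ (n + 3) / if j = i then 4 else 6 := by
  set k : Fin n → ℕ := fun l => (if l = i then 1 else 0) + (if l = j then 2 else 0)
  have hprod (x : EuclideanSpace ℝ (Fin n)) : ∏ l, x l ^ k l = x i * x j ^ 2 := by
    simp only [k, pow_add, Finset.prod_mul_distrib, pow_ite, pow_one, pow_zero,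
      Finset.prod_ite_eq', Finset.mem_univ, if_true]
  have hnum : ∏ l, h ^ (k l + 1) = h ^ (n + 3) := by
    rw [Finset.prod_pow_eq_pow_sum]
    simp [k, Finset.sum_add_distrib]
    ring
  have hden : ∏ l, ((k l : ℝ) + 1) = if j = i then 4 else 6 := by
    split_ifs with hji
    · subst hji
      rw [Fintype.prod_eq_single j fun l hl => by simp [k, hl]]
      norm_num [k]
    · rw [Fintype.prod_eq_mul i j (Ne.symm hji) fun l hl => by simp [k, hl.1, hl.2]]
      norm_num [k, hji, Ne.symm hji]
  simp_rw [← hprod]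
  rw [setIntegral_cube_prod_pow n hh k, Finset.prod_div_distrib, hnum, hden]

theorem setIntegral_cube_mul_norm_sq (n : ℕ) {h : ℝ} (hh : 0 ≤ h) (i : Fin n) :
    ∫ x in cube n h, x i * ‖x‖ ^ 2 = (2 * n + 1) / 12 * h ^ (n + 3) := by
  have hint (j : Fin n) : IntegrableOn (fun x : EuclideanSpace ℝ (Fin n) => x i * x j ^ 2)
      (cube n h) := by
    refine ContinuousOn.integrableOn_compact (isCompact_cube n h) (Continuous.continuousOn ?_)
    fun_prop
  have hsplit (j : Fin n) : h ^ (n + 3) / (if j = i then 4 else 6 : ℝ) =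
      h ^ (n + 3) / 6 + if j = i then h ^ (n + 3) / 12 else 0 := by
    split_ifs <;> ring
  simp_rw [EuclideanSpace.norm_sq_eq, Real.norm_eq_abs, sq_abs, Finset.mul_sum]
  rw [integral_finsetSum _ fun j _ => hint j]
  simp_rw [setIntegral_cube_mul_sq n hh, hsplit]
  rw [Finset.sum_add_distrib, Finset.sum_ite_eq']
  simp only [Finset.sum_const, Finset.card_univ, Fintype.card_fin, nsmul_eq_mul,
    Finset.mem_univ, if_true]
  ring

theorem abs_setIntegral_cube_mul_le {n : ℕ} {h : ℝ} (hh : 0 ≤ h) (i : Fin n)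
    {g : EuclideanSpace ℝ (Fin n) → ℝ} {C : ℝ} (hg : ∀ x ∈ cube n h, |g x| ≤ C * ‖x‖ ^ 2) :
    |∫ x in cube n h, x i * g x| ≤ C * ((2 * n + 1) / 12 * h ^ (n + 3)) := by
  have hbound : ∀ x ∈ cube n h, ‖x i * g x‖ ≤ C * (x i * ‖x‖ ^ 2) := fun x hx => by
    rw [Real.norm_eq_abs, abs_mul, abs_of_nonneg (hx i).1, mul_left_comm]
    exact mul_le_mul_of_nonneg_left (hg x hx) (hx i).1
  have hint : IntegrableOn (fun x : EuclideanSpace ℝ (Fin n) => C * (x i * ‖x‖ ^ 2))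
      (cube n h) := by
    refine ContinuousOn.integrableOn_compact (isCompact_cube n h) (Continuous.continuousOn ?_)
    fun_prop
  rw [← Real.norm_eq_abs, ← setIntegral_cube_mul_norm_sq n hh i, ← integral_const_mul]
  exact norm_integral_le_of_norm_le hint
    (ae_restrict_of_forall_mem (isCompact_cube n h).measurableSet hbound)

theorem EuclideanSpace.norm_le_sqrt_card_mul {ι : Type*} [Fintype ι] {x : EuclideanSpace ℝ ι}
    {B : ℝ} (hB : 0 ≤ B) (hx : ∀ i, |x i| ≤ B) : ‖x‖ ≤ √(Fintype.card ι) * B := by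
  refine (pow_le_pow_iff_left₀ (norm_nonneg x) (by positivity) two_ne_zero).1 ?_
  rw [mul_pow, Real.sq_sqrt (Nat.cast_nonneg _), EuclideanSpace.norm_sq_eq]
  calc ∑ i, ‖x i‖ ^ 2 ≤ ∑ _i : ι, B ^ 2 := Finset.sum_le_sum fun i _ => by
        rw [Real.norm_eq_abs]; exact pow_le_pow_left₀ (abs_nonneg _) (hx i) 2
    _ = Fintype.card ι * B ^ 2 := by simp

theorem Dinv_w_bound_hypercube_general
    (n : ℕ)
    (x0 : EuclideanSpace ℝ (Fin n))
    (h : ℝ) (hh : 0 < h)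
    (f : EuclideanSpace ℝ (Fin n) → ℝ)
    (U : Set (EuclideanSpace ℝ (Fin n))) (hU : IsOpen U)
    (hsub : {y : EuclideanSpace ℝ (Fin n) | ∀ l, y l - x0 l ∈ Set.Icc (0 : ℝ) h} ⊆ U)
    (hf : ContDiffOn ℝ 2 f U)
    (L : NNReal)
    (hlip : LipschitzOnWith L (gradient f)
      {y : EuclideanSpace ℝ (Fin n) | ∀ l, y l - x0 l ∈ Set.Icc (0 : ℝ) h})
    (w : Fin n → ℝ)
    (hw : ∀ i, w i = ∫ x in cube n h,
        x i * (f (x0 + x) - f x0 - (inner ℝ (gradient f x0) x : ℝ))) :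
    ‖vecE (fun i => w i / h)‖ ≤
      (Real.sqrt n / 24) * ((2 * (n : ℝ) + 1) / n) * (L : ℝ) * (h ^ n)
        * (h * Real.sqrt n) ^ 2 := by
  set M := {y : EuclideanSpace ℝ (Fin n) | ∀ l, y l - x0 l ∈ Icc (0 : ℝ) h}
  have hM : M = (· + -x0) ⁻¹' cube n h := by ext y; simp [M, cube, sub_eq_add_neg]
  have hconv : Convex ℝ M := hM ▸ (convex_cube n h).translate_preimage_left (-x0)
  have hdiff : ∀ y ∈ M, DifferentiableAt ℝ f y := fun y hy =>
    (hf.contDiffAt (hU.mem_nhds (hsub hy))).differentiableAt two_ne_zero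
  have hx0 : x0 ∈ M := by simp [M, hh.le]
  have hremainder : ∀ x ∈ cube n h,
      |f (x0 + x) - f x0 - ⟪gradient f x0, x⟫| ≤ L / 2 * ‖x‖ ^ 2 := fun x hx => by
    simpa using abs_sub_sub_inner_gradient_le hconv hdiff hlip hx0 (b := x0 + x)
      (by rw [hM]; simpa using hx)
  have hcoord (i : Fin n) : |w i / h| ≤ L * (2 * n + 1) / 24 * h ^ (n + 2) := by
    rw [hw i, abs_div, abs_of_pos hh, div_le_iff₀ hh]
    refine (abs_setIntegral_cube_mul_le hh.le i hremainder).trans_eq ?_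
    ring
  calc ‖vecE fun i => w i / h‖ ≤ √n * (L * (2 * n + 1) / 24 * h ^ (n + 2)) := by
        simpa using EuclideanSpace.norm_le_sqrt_card_mul (by positivity) fun i => hcoord i
    _ = _ := by
        rcases eq_or_ne n 0 with rfl | hn
        · simp
        · rw [mul_pow, Real.sq_sqrt n.cast_nonneg]
          field_simp
          ring

/-- Lemma 4.3 of the paper (hypercube case, all side lengths equal to `h`):
with `wᵢ = ∫ xᵢ·R₁(x⁰+x) dx` over `[0,h]ⁿ` and `D = h·Id`, one has
`‖D⁻¹w‖ ≤ (√n/24)·((2n+1)/n)·L_{∇f}·Δ·Δ_S²`, where `Δ = hⁿ` and `Δ_S = h√n`. -/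
theorem Dinv_w_bound_hypercube
    (n : ℕ) (hn : 1 ≤ n)
    (x0 : EuclideanSpace ℝ (Fin n))
    (h : ℝ) (hh : 0 < h)
    (f : EuclideanSpace ℝ (Fin n) → ℝ)
    (U : Set (EuclideanSpace ℝ (Fin n))) (hU : IsOpen U)
    (hsub : {y : EuclideanSpace ℝ (Fin n) | ∀ l, y l - x0 l ∈ Set.Icc (0 : ℝ) h} ⊆ U)
    (hf : ContDiffOn ℝ 2 f U)
    (L : NNReal)
    (hlip : LipschitzOnWith L (gradient f)
      {y : EuclideanSpace ℝ (Fin n) | ∀ l, y l - x0 l ∈ Set.Icc (0 : ℝ) h})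
    (w : Fin n → ℝ)
    (hw : ∀ i, w i = ∫ x in cube n h,
        x i * (f (x0 + x) - f x0 - (inner ℝ (gradient f x0) x : ℝ))) :
    ‖vecE (fun i => w i / h)‖ ≤
      (Real.sqrt n / 24) * ((2 * (n : ℝ) + 1) / n) * (L : ℝ) * (h ^ n)
        * (h * Real.sqrt n) ^ 2 :=
  Dinv_w_bound_hypercube_general n x0 h hh f U hU hsub hf L hlip w hw

end
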